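/- Two partial permutations π, τ on a finite set {1,…,n} are conjugate in the symmetric inverse semigroup IS_n (under the transitive closure of primary conjugacy) if and only if their cyclic types coincide, i.e., the multisets of lengths of cycles in their action graphs are equal. -/

import Mathlib

variable {S : Type*} [Semigroup S]

/-- Primary conjugacy: `a = x*y` and `b = y*x` for some `x, y`. -/
def PConj (a b : S) : Prop := ∃ x y : S, a = x * y ∧ b = y * x

/-- Conjugacy: the transitive closure of primary conjugacy. -/
def SConj : S → S → Prop := Relation.TransGen PConj

/-- `pw a n` is `a ^ n` for `n ≥ 1` (with junk value `a` at `n = 0`). -/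
def pw (a : S) : ℕ → S
  | 0 => a
  | 1 => a
  | n + 2 => pw a (n + 1) * a

/-- An element is a group element iff it lies in some subgroup of `S`:
there is an idempotent `e` acting as identity on `a`, and an inverse of `a`
relative to `e`. -/
def IsGroupElement (a : S) : Prop :=
  ∃ e b : S, e * e = e ∧ e * a = a ∧ a * e = a ∧ a * b = e ∧ b * a = e

/-- An element is group-bound if some positive power is a group element. -/
def GroupBound (a : S) : Prop := ∃ n : ℕ, 1 ≤ n ∧ IsGroupElement (pw a n)

/-- Green's L-relation: same principal left ideal in `S¹`. -/
def LRel (a b : S) : Prop :=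
  (∃ u : WithOne S, u * (a : WithOne S) = (b : WithOne S)) ∧
  (∃ u : WithOne S, u * (b : WithOne S) = (a : WithOne S))

/-- Green's R-relation: same principal right ideal in `S¹`. -/
def RRel (a b : S) : Prop :=
  (∃ u : WithOne S, (a : WithOne S) * u = (b : WithOne S)) ∧
  (∃ u : WithOne S, (b : WithOne S) * u = (a : WithOne S))

/-- Green's H-relation. -/
def HRel (a b : S) : Prop := LRel a b ∧ RRel a b

/-- Green's D-relation. -/
def DRel (a b : S) : Prop := ∃ c : S, LRel a c ∧ RRel c b

/-- The symmetric inverse semigroup `IS_n`: partial injective maps (partial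
equivalences) on `Fin n`, under composition. -/
instance {n : ℕ} : Semigroup ((Fin n) ≃. (Fin n)) where
  mul f g := g.trans f
  mul_assoc f g h := (PEquiv.trans_assoc h g f).symm

/-- The number of points of `Fin n` lying on a cycle of `π` of exact length
`ℓ`: points returning to themselves after `ℓ` applications of `π` but after no
smaller positive number of applications.  Two partial permutations have the
same cyclic type (multiset of cycle lengths) iff these counts agree for all
`ℓ ≥ 1`, since the number of cycles of length `ℓ` is this count divided by `ℓ`. -/
noncomputable def exactPeriodCount {n : ℕ} (π : (Fin n) ≃. (Fin n)) (ℓ : ℕ) : ℕ :=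
  Nat.card {x : Fin n // pw π ℓ x = some x ∧
    ∀ m : ℕ, 1 ≤ m → m < ℓ → pw π m x ≠ some x}

section Aux

open Relation

attribute [local instance] Classical.propDecidable

theorem pconj_symm {a b : S} (h : PConj a b) : PConj b a := by
  obtain ⟨x, y, h1, h2⟩ := h; exact ⟨y, x, h2, h1⟩

theorem sconj_symm {a b : S} (h : SConj a b) : SConj b a := by
  induction h with
  | single h => exact TransGen.single (pconj_symm h)
  | tail _ h ih => exact TransGen.head (pconj_symm h) ih

variable {n : ℕ}

theorem isn_mul_apply (f g : (Fin n) ≃. (Fin n)) (x : Fin n) :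
    (f * g) x = (g x).bind f := rfl

/-- iterate of a partial map -/
def itf (π : (Fin n) ≃. (Fin n)) : ℕ → Fin n → Option (Fin n)
  | 0, x => some x
  | k+1, x => (itf π k x).bind π

@[simp] theorem itf_zero (π : (Fin n) ≃. (Fin n)) (x) : itf π 0 x = some x := rfl

theorem itf_succ (π : (Fin n) ≃. (Fin n)) (k x) :
    itf π (k+1) x = (itf π k x).bind π := rfl

@[simp] theorem itf_one (π : (Fin n) ≃. (Fin n)) (x) : itf π 1 x = π x := by
  simp [itf_succ]

theorem itf_add (π : (Fin n) ≃. (Fin n)) (a b : ℕ) (x : Fin n) :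
    itf π (a + b) x = (itf π a x).bind (itf π b) := by
  induction b with
  | zero => simp; cases itf π a x <;> rfl
  | succ b ih =>
      rw [← Nat.add_assoc, itf_succ, ih, Option.bind_assoc]
      rfl

theorem itf_succ' (π : (Fin n) ≃. (Fin n)) (k x) :
    itf π (k+1) x = (π x).bind (itf π k) := by
  rw [Nat.add_comm, itf_add, itf_one]

theorem pw_eq_itf (π : (Fin n) ≃. (Fin n)) :
    ∀ ℓ, 1 ≤ ℓ → ∀ x, pw π ℓ x = itf π ℓ x := by
  intro ℓ
  induction ℓ with
  | zero => intro h; exact absurd h (by norm_num)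
  | succ k ih =>
      intro _ x
      match k, ih with
      | 0, _ => rw [itf_one]; rfl
      | k+1, ih =>
          show (pw π (k+1) * π) x = _
          rw [isn_mul_apply, itf_succ']
          cases h : π x with
          | none => rfl
          | some b => simp only [Option.bind_some]; exact ih (by omega) b

theorem itf_isSome_of_add {π : (Fin n) ≃. (Fin n)} {a b : ℕ} {x : Fin n}
    (h : (itf π (a + b) x).isSome) : (itf π a x).isSome := by
  rw [itf_add] at h
  cases hx : itf π a x with
  | none => rw [hx] at h; simp at h
  | some _ => rfl

theorem itf_inj {π : (Fin n) ≃. (Fin n)} :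
    ∀ {k : ℕ} {u v w : Fin n}, itf π k u = some w → itf π k v = some w → u = v := by
  intro k
  induction k with
  | zero => intro u v w h1 h2; simp at h1 h2; rw [h1, h2]
  | succ k ih =>
      intro u v w h1 h2
      rw [itf_succ] at h1 h2
      obtain ⟨u', hu', hu2⟩ := Option.bind_eq_some_iff.1 h1
      obtain ⟨v', hv', hv2⟩ := Option.bind_eq_some_iff.1 h2
      have : u' = v' := PEquiv.inj π hu2 hv2
      exact ih hu' (this ▸ hv')

end Aux
section Aux2

attribute [local instance] Classical.propDecidable

variable {n : ℕ}

/-- shifting along the cycle preserves periods -/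
theorem itf_period_shift {π : (Fin n) ≃. (Fin n)} {a b : Fin n} {ℓ : ℕ}
    (h : itf π ℓ a = some a) (hab : π a = some b) : itf π ℓ b = some b := by
  have h1 : itf π (ℓ + 1) a = some b := by rw [itf_succ, h, Option.bind_some, hab]
  have h2 : itf π (ℓ + 1) a = (π a).bind (itf π ℓ) := itf_succ' π ℓ a
  rw [h1, hab, Option.bind_some] at h2
  exact h2.symm

theorem itf_period_unshift {π : (Fin n) ≃. (Fin n)} {a b : Fin n} {ℓ m : ℕ}
    (hℓ : 1 ≤ ℓ) (h : itf π ℓ a = some a) (hab : π a = some b)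
    (hm : itf π m b = some b) : itf π m a = some a := by
  obtain ⟨k, rfl⟩ : ∃ k, ℓ = k + 1 := ⟨ℓ - 1, by omega⟩
  -- a = itf π k b
  have hk : itf π k b = some a := by
    have := itf_succ' π k a
    rw [hab, Option.bind_some] at this
    rw [← this, h]
  have h1 : itf π (k + m) b = (itf π k b).bind (itf π m) := itf_add π k m b
  have h2 : itf π (m + k) b = (itf π m b).bind (itf π k) := itf_add π m k b
  rw [hk, Option.bind_some] at h1
  rw [hm, Option.bind_some, hk, Nat.add_comm m k, h1] at h2
  exact h2

/-- the intertwining identity for primary conjugation -/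
theorem itf_intertwine {x y : (Fin n) ≃. (Fin n)} {a b : Fin n}
    (hy : y a = some b) : ∀ k, (itf (x * y) k a).bind y = itf (y * x) k b := by
  intro k
  induction k with
  | zero => simpa using hy
  | succ k ih =>
      rw [itf_succ, Option.bind_assoc]
      have : ∀ z : Fin n, ((x * y) z).bind y = (y z).bind (y * x) := by
        intro z
        rw [isn_mul_apply, Option.bind_assoc]
        rfl
      calc (itf (x*y) k a).bind (fun z => ((x*y) z).bind y)
          = (itf (x*y) k a).bind (fun z => (y z).bind (y*x)) := by
            cases itf (x*y) k a with
            | none => rfl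
            | some c => simp only [Option.bind_some]; exact this c
        _ = ((itf (x*y) k a).bind y).bind (y*x) := (Option.bind_assoc _ _ _).symm
        _ = itf (y*x) (k+1) b := by rw [ih, ← itf_succ]

/-- exact period points, itf version -/
def ExactPt (π : (Fin n) ≃. (Fin n)) (ℓ : ℕ) (a : Fin n) : Prop :=
  itf π ℓ a = some a ∧ ∀ m : ℕ, 1 ≤ m → m < ℓ → itf π m a ≠ some a

theorem count_eq_it (π : (Fin n) ≃. (Fin n)) {ℓ : ℕ} (hℓ : 1 ≤ ℓ) :
    exactPeriodCount π ℓ = Nat.card {a : Fin n // ExactPt π ℓ a} := by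
  apply Nat.card_congr
  apply Equiv.subtypeEquivRight
  intro a
  constructor
  · rintro ⟨h1, h2⟩
    exact ⟨by rw [← pw_eq_itf π ℓ hℓ]; exact h1,
      fun m hm1 hm2 => by rw [← pw_eq_itf π m hm1]; exact h2 m hm1 hm2⟩
  · rintro ⟨h1, h2⟩
    exact ⟨by rw [pw_eq_itf π ℓ hℓ]; exact h1,
      fun m hm1 hm2 => by rw [pw_eq_itf π m hm1]; exact h2 m hm1 hm2⟩

theorem pconj_count_le {π τ : (Fin n) ≃. (Fin n)} (h : PConj π τ) {ℓ : ℕ} (hℓ : 1 ≤ ℓ) :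
    exactPeriodCount π ℓ ≤ exactPeriodCount τ ℓ := by
  obtain ⟨x, y, rfl, rfl⟩ := h
  rw [count_eq_it _ hℓ, count_eq_it _ hℓ]
  -- for every exact point a of x*y, y a is defined
  have key : ∀ a : Fin n, ExactPt (x*y) ℓ a → ∃ b, y a = some b ∧ ExactPt (y*x) ℓ b := by
    intro a ha
    obtain ⟨k, hk⟩ : ∃ k, ℓ = k + 1 := ⟨ℓ - 1, by omega⟩
    have hsome : ∃ a₁, (x*y) a = some a₁ := by
      have := itf_succ' (x*y) k a
      rw [← hk, ha.1] at this
      exact Option.bind_eq_some_iff.1 this.symm |>.imp (fun a₁ h => h.1)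
    obtain ⟨a₁, ha₁⟩ := hsome
    obtain ⟨b, hb, hxb⟩ : ∃ b, y a = some b ∧ x b = some a₁ := by
      rw [isn_mul_apply] at ha₁
      exact Option.bind_eq_some_iff.1 ha₁
    refine ⟨b, hb, ?_, ?_⟩
    · have h1 := itf_intertwine (x := x) (y := y) hb ℓ
      rw [ha.1, Option.bind_some, hb] at h1
      exact h1.symm
    · intro m hm1 hm2 hcon
      have h2 := itf_intertwine (x := y) (y := x) hxb m
      rw [hcon, Option.bind_some, hxb] at h2
      rw [isn_mul_apply] at ha₁
      have ha₁' : (x * y) a = some a₁ := by rw [isn_mul_apply]; exact ha₁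
      exact ha.2 m hm1 hm2 (itf_period_unshift hℓ ha.1 ha₁' h2.symm)
  classical
  choose F hF1 hF2 using key
  refine Nat.card_le_card_of_injective
    (fun z : {a : Fin n // ExactPt (x*y) ℓ a} =>
      (⟨F z.1 z.2, hF2 z.1 z.2⟩ : {b : Fin n // ExactPt (y*x) ℓ b})) ?_
  rintro ⟨a, ha⟩ ⟨a', ha'⟩ hEq
  simp only [Subtype.mk.injEq] at hEq ⊢
  exact PEquiv.inj y (Option.mem_def.2 (hF1 a ha))
    (Option.mem_def.2 (hEq ▸ hF1 a' ha'))

theorem sconj_counts {π τ : (Fin n) ≃. (Fin n)} (h : SConj π τ) :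
    ∀ ℓ : ℕ, 1 ≤ ℓ → exactPeriodCount π ℓ = exactPeriodCount τ ℓ := by
  induction h with
  | single h => exact fun ℓ hℓ =>
      le_antisymm (pconj_count_le h hℓ) (pconj_count_le (pconj_symm h) hℓ)
  | tail _ h ih =>
      intro ℓ hℓ
      exact (ih ℓ hℓ).trans
        (le_antisymm (pconj_count_le h hℓ) (pconj_count_le (pconj_symm h) hℓ))

end Aux2
section Aux3

attribute [local instance] Classical.propDecidable

variable {n : ℕ}

/-- cyclic points -/
def Cyc (π : (Fin n) ≃. (Fin n)) (a : Fin n) : Prop :=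
  ∃ ℓ : ℕ, 1 ≤ ℓ ∧ itf π ℓ a = some a

theorem cyc_isSome {π : (Fin n) ≃. (Fin n)} {a : Fin n} (h : Cyc π a) (k : ℕ) :
    (itf π k a).isSome := by
  obtain ⟨ℓ, hℓ, hper⟩ := h
  have hmul : ∀ m : ℕ, itf π (m * ℓ) a = some a := by
    intro m
    induction m with
    | zero => simp
    | succ m ih => rw [Nat.succ_mul, itf_add, ih, Option.bind_some, hper]
  have := hmul k
  rw [show k * ℓ = k + (k * ℓ - k) by
    have : k ≤ k * ℓ := Nat.le_mul_of_pos_right k (by omega); omega] at this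
  exact itf_isSome_of_add (by rw [this]; rfl)

theorem cyc_of_two {π : (Fin n) ≃. (Fin n)} {a : Fin n} {i j : ℕ}
    (hi : (itf π i a).isSome) (hj : itf π j a = itf π i a) (hij : i < j) :
    Cyc π a := by
  set d := j - i with hd_def
  have hd : 1 ≤ d := by omega
  have hsome_d : (itf π d a).isSome := by
    have hj' : (itf π (d + i) a).isSome := by
      rw [show d + i = j by omega, hj]; exact hi
    exact itf_isSome_of_add hj'
  obtain ⟨w, hw⟩ := Option.isSome_iff_exists.1 hsome_d
  obtain ⟨g, hg⟩ := Option.isSome_iff_exists.1 hi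
  have hiw : itf π i w = some g := by
    have h1 : itf π (d + i) a = (itf π d a).bind (itf π i) := itf_add π d i a
    rw [show d + i = j by omega, hj, hg, hw, Option.bind_some] at h1
    exact h1.symm
  have hwa : w = a := itf_inj hiw hg
  exact ⟨d, hd, by rw [hw, hwa]⟩

theorem cyc_of_isSome {π : (Fin n) ≃. (Fin n)} {a : Fin n}
    (h : (itf π (n + 1) a).isSome) : Cyc π a := by
  have hall : ∀ i : Fin (n + 2), (itf π (i : ℕ) a).isSome := by
    intro i
    have hle : (i : ℕ) ≤ n + 1 := by omega
    rw [show (n + 1 : ℕ) = (i : ℕ) + (n + 1 - (i : ℕ)) by omega] at h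
    exact itf_isSome_of_add h
  have hcard : Fintype.card (Fin n) < Fintype.card (Fin (n + 2)) := by simp
  obtain ⟨i, j, hij, hEq⟩ := Fintype.exists_ne_map_eq_of_card_lt
    (fun i : Fin (n + 2) => (itf π (i : ℕ) a).get (hall i)) hcard
  have heq2 : itf π (i : ℕ) a = itf π (j : ℕ) a := by
    rw [← Option.some_get (hall i), ← Option.some_get (hall j), hEq]
  rcases Nat.lt_or_ge (i : ℕ) (j : ℕ) with hlt | hge
  · exact cyc_of_two (hall i) heq2.symm hlt
  · have hlt : (j : ℕ) < (i : ℕ) := by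
      rcases Nat.eq_or_lt_of_le hge with h' | h'
      · exact absurd (Fin.ext h'.symm) hij
      · exact h'
    exact cyc_of_two (hall j) heq2 hlt

end Aux3
section Aux4

attribute [local instance] Classical.propDecidable

variable {n : ℕ}

theorem restr_apply (π : (Fin n) ≃. (Fin n)) (s : Set (Fin n)) [DecidablePred (· ∈ s)]
    (a : Fin n) :
    (π * PEquiv.ofSet s) a = if a ∈ s then π a else none := by
  rw [isn_mul_apply]
  by_cases h : a ∈ s
  · rw [if_pos h]
    have : PEquiv.ofSet s a = some a := by simp [PEquiv.ofSet, h]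
    rw [this, Option.bind_some]
  · rw [if_neg h]
    have : PEquiv.ofSet s a = none := by simp [PEquiv.ofSet, h]
    rw [this, Option.bind_none]

theorem restr_congr_set (π : (Fin n) ≃. (Fin n)) (s t : Set (Fin n))
    [DecidablePred (· ∈ s)] [DecidablePred (· ∈ t)]
    (h : ∀ a, a ∈ s ↔ a ∈ t) :
    π * PEquiv.ofSet s = π * PEquiv.ofSet t := by
  apply PEquiv.ext
  intro a
  rw [restr_apply, restr_apply, if_congr (h a) rfl rfl]

/-- the set of points where `π` can be applied `k` times -/
def sset (π : (Fin n) ≃. (Fin n)) (k : ℕ) : Set (Fin n) := {a | (itf π k a).isSome}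

theorem restr_step (π : (Fin n) ≃. (Fin n)) (k : ℕ) :
    PEquiv.ofSet (sset π k) * π = π * PEquiv.ofSet (sset π (k + 1)) := by
  apply PEquiv.ext
  intro a
  rw [restr_apply, isn_mul_apply]
  have hit : itf π (k + 1) a = (π a).bind (itf π k) := itf_succ' π k a
  cases hπ : π a with
  | none =>
      rw [Option.bind_none]
      have : ¬ a ∈ sset π (k + 1) := by
        simp only [sset, Set.mem_setOf_eq, hit, hπ, Option.bind_none]
        simp
      rw [if_neg this]
  | some b =>
      have hmem : a ∈ sset π (k + 1) ↔ b ∈ sset π k := by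
        simp only [sset, Set.mem_setOf_eq, hit, hπ, Option.bind_some]
      by_cases hb : b ∈ sset π k
      · rw [if_pos (hmem.2 hb), Option.bind_some]
        simp [PEquiv.ofSet, hb]
      · rw [if_neg (fun h => hb (hmem.1 h)), Option.bind_some]
        simp [PEquiv.ofSet, hb]

theorem pconj_refl (π : (Fin n) ≃. (Fin n)) : PConj π π :=
  ⟨PEquiv.refl (Fin n), π, (PEquiv.trans_refl π).symm, (PEquiv.refl_trans π).symm⟩

theorem sconj_restr (π : (Fin n) ≃. (Fin n)) :
    ∀ k : ℕ, SConj π (π * PEquiv.ofSet (sset π k)) := by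
  intro k
  induction k with
  | zero =>
      have : π * PEquiv.ofSet (sset π 0) = π := by
        apply PEquiv.ext
        intro a
        rw [restr_apply, if_pos (by simp [sset])]
      rw [this]
      exact Relation.TransGen.single (pconj_refl π)
  | succ k ih =>
      refine Relation.TransGen.tail ih ⟨π, PEquiv.ofSet (sset π k), rfl, ?_⟩
      exact (restr_step π k).symm

theorem sconj_core (π : (Fin n) ≃. (Fin n)) :
    SConj π (π * PEquiv.ofSet {a | Cyc π a}) := by
  have h := sconj_restr π (n + 1)
  rwa [restr_congr_set π (sset π (n + 1)) {a | Cyc π a}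
    (fun a => ⟨cyc_of_isSome, fun h => cyc_isSome h (n + 1)⟩)] at h

end Aux4
section Aux5

attribute [local instance] Classical.propDecidable

variable {n : ℕ}

theorem cyc_some {π : (Fin n) ≃. (Fin n)} {a : Fin n} (h : Cyc π a) : (π a).isSome := by
  have := cyc_isSome h 1
  rwa [itf_one] at this

theorem cyc_get {π : (Fin n) ≃. (Fin n)} {a : Fin n} (h : Cyc π a) :
    Cyc π ((π a).get (cyc_some h)) := by
  obtain ⟨ℓ, hℓ, hper⟩ := h
  exact ⟨ℓ, hℓ, itf_period_shift hper (Option.some_get _).symm⟩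

theorem cyc_surj {π : (Fin n) ≃. (Fin n)} {b : Fin n} (hb : Cyc π b) :
    ∃ a, π a = some b ∧ Cyc π a := by
  obtain ⟨ℓ, hℓ, hper⟩ := hb
  obtain ⟨k, rfl⟩ : ∃ k, ℓ = k + 1 := ⟨ℓ - 1, by omega⟩
  rw [itf_succ] at hper
  obtain ⟨a, ha, hab⟩ := Option.bind_eq_some_iff.1 hper
  refine ⟨a, hab, (k + 1), hℓ, ?_⟩
  have h1 : itf π (k + (k + 1)) b = (itf π k b).bind (itf π (k + 1)) := itf_add π k (k + 1) b
  have h2 : itf π ((k + 1) + k) b = (itf π (k + 1) b).bind (itf π k) := itf_add π (k + 1) k b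
  rw [ha, Option.bind_some] at h1
  rw [itf_succ, ha, Option.bind_some, hab, Option.bind_some, ha] at h2
  rw [show k + (k + 1) = k + 1 + k from by omega] at h1
  rw [h1] at h2
  exact h2

/-- the restriction of `π` to its cyclic points, as a permutation -/
noncomputable def permC (π : (Fin n) ≃. (Fin n)) : Equiv.Perm {a : Fin n // Cyc π a} :=
  Equiv.ofBijective (fun z => ⟨(π z.1).get (cyc_some z.2), cyc_get z.2⟩)
    ⟨by
      rintro ⟨a, ha⟩ ⟨a', ha'⟩ hEq
      simp only [Subtype.mk.injEq] at hEq ⊢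
      have h1 : π a = some ((π a).get (cyc_some ha)) := (Option.some_get _).symm
      have h2 : π a' = some ((π a).get (cyc_some ha)) := by
        rw [hEq] at h1 ⊢
        exact (Option.some_get _).symm
      exact PEquiv.inj π (Option.mem_def.2 h1) (Option.mem_def.2 h2),
     by
      rintro ⟨b, hb⟩
      obtain ⟨a, hab, ha⟩ := cyc_surj hb
      refine ⟨⟨a, ha⟩, ?_⟩
      apply Subtype.ext
      simp only
      rw [Option.get_of_mem _ (Option.mem_def.2 hab)]⟩

theorem permC_apply_val (π : (Fin n) ≃. (Fin n)) (z : {a : Fin n // Cyc π a}) :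
    π z.1 = some ((permC π z).1) := by
  simp only [permC, Equiv.ofBijective_apply]
  exact (Option.some_get _).symm

theorem permC_iter (π : (Fin n) ≃. (Fin n)) :
    ∀ (k : ℕ) (z : {a : Fin n // Cyc π a}),
      itf π k z.1 = some (((permC π)^[k] z).1) := by
  intro k
  induction k with
  | zero => intro z; simp
  | succ k ih =>
      intro z
      rw [Function.iterate_succ_apply', itf_succ, ih z, Option.bind_some]
      exact permC_apply_val π _

theorem permC_isPeriodicPt_iff (π : (Fin n) ≃. (Fin n)) (z : {a : Fin n // Cyc π a}) (m : ℕ) :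
    Function.IsPeriodicPt (permC π) m z ↔ itf π m z.1 = some z.1 := by
  constructor
  · intro h
    rw [permC_iter π m z, h]
  · intro h
    have := permC_iter π m z
    rw [h] at this
    exact Subtype.ext (Option.some_injective _ this.symm)

theorem permC_mp_eq_iff (π : (Fin n) ≃. (Fin n)) {ℓ : ℕ} (hℓ : 1 ≤ ℓ)
    (z : {a : Fin n // Cyc π a}) :
    Function.minimalPeriod (permC π) z = ℓ ↔ ExactPt π ℓ z.1 := by
  constructor
  · intro h
    constructor
    · rw [← permC_isPeriodicPt_iff, ← h]
      exact Function.iterate_minimalPeriod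
    · intro m hm1 hm2 hcon
      exact Function.not_isPeriodicPt_of_pos_of_lt_minimalPeriod (by omega) (by omega)
        ((permC_isPeriodicPt_iff π z m).2 hcon)
  · rintro ⟨h1, h2⟩
    have hper : Function.IsPeriodicPt (permC π) ℓ z := (permC_isPeriodicPt_iff π z ℓ).2 h1
    have hle : Function.minimalPeriod (permC π) z ≤ ℓ :=
      hper.minimalPeriod_le (by omega)
    have hpos : 0 < Function.minimalPeriod (permC π) z := hper.minimalPeriod_pos (by omega)
    rcases Nat.lt_or_ge (Function.minimalPeriod (permC π) z) ℓ with hlt | hge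
    · exfalso
      exact h2 _ (by omega) hlt ((permC_isPeriodicPt_iff π z _).1
        Function.iterate_minimalPeriod)
    · omega

theorem count_eq_mp (π : (Fin n) ≃. (Fin n)) {ℓ : ℕ} (hℓ : 1 ≤ ℓ) :
    Nat.card {a : Fin n // ExactPt π ℓ a} =
      Nat.card {z : {a : Fin n // Cyc π a} // Function.minimalPeriod (permC π) z = ℓ} := by
  apply Nat.card_congr
  exact
    { toFun := fun w => ⟨⟨w.1, ⟨ℓ, hℓ, w.2.1⟩⟩, (permC_mp_eq_iff π hℓ _).2 w.2⟩
      invFun := fun w => ⟨w.1.1, (permC_mp_eq_iff π hℓ _).1 w.2⟩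
      left_inv := fun w => rfl
      right_inv := fun w => rfl }

theorem perm_periodic {α : Type*} [Finite α] (p : Equiv.Perm α) (x : α) :
    x ∈ Function.periodicPts p := by
  obtain ⟨i, j, hne, hEq⟩ := Finite.exists_ne_map_eq_of_infinite (fun k : ℕ => p^[k] x)
  rcases Nat.lt_or_ge i j with h | h
  · have : p^[i] (p^[j - i] x) = p^[i] x := by
      rw [← Function.iterate_add_apply, show i + (j - i) = j from by omega, hEq]
    have hper : p^[j - i] x = x := Function.Injective.iterate p.injective i this
    exact Function.mk_mem_periodicPts (by omega) hper
  · have hlt : j < i := by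
      rcases Nat.eq_or_lt_of_le h with h' | h'
      · exact absurd h'.symm hne
      · omega
    have : p^[j] (p^[i - j] x) = p^[j] x := by
      rw [← Function.iterate_add_apply, show j + (i - j) = i from by omega, hEq]
    have hper : p^[i - j] x = x := Function.Injective.iterate p.injective j this
    exact Function.mk_mem_periodicPts (by omega) hper

theorem perm_mp_pos {α : Type*} [Finite α] (p : Equiv.Perm α) (x : α) :
    0 < Function.minimalPeriod p x :=
  Function.minimalPeriod_pos_of_mem_periodicPts (perm_periodic p x)

end Aux5
section Aux6

open Function Equiv

attribute [local instance] Classical.propDecidable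

/-- the forward orbit of a point -/
def Orb {α : Type*} (p : Equiv.Perm α) (x₀ : α) (z : α) : Prop := ∃ k : ℕ, p^[k] x₀ = z

theorem orb_iff {α : Type*} [Finite α] (p : Equiv.Perm α) (x₀ : α) (z : α) :
    Orb p x₀ (p z) ↔ Orb p x₀ z := by
  have hpos : 0 < minimalPeriod p x₀ := perm_mp_pos p x₀
  constructor
  · rintro ⟨k, hk⟩
    cases k with
    | zero =>
        refine ⟨minimalPeriod p x₀ - 1, p.injective ?_⟩
        have h5 := Function.iterate_succ_apply' p (minimalPeriod p x₀ - 1) x₀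
        rw [show (minimalPeriod p x₀ - 1).succ = minimalPeriod p x₀ from by omega,
          Function.iterate_minimalPeriod] at h5
        rw [← h5]
        simpa using hk
    | succ m =>
        rw [Function.iterate_succ_apply'] at hk
        exact ⟨m, p.injective hk⟩
  · rintro ⟨k, rfl⟩
    exact ⟨k + 1, (Function.iterate_succ_apply' p k x₀)⟩

theorem orb_not_iff {α : Type*} [Finite α] (p : Equiv.Perm α) (x₀ : α) :
    ∀ z, ¬ Orb p x₀ z ↔ ¬ Orb p x₀ (p z) :=
  fun z => not_congr (orb_iff p x₀ z).symm

/-- the orbit of `x₀` is parameterized by `Fin ℓ` -/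
noncomputable def orbEquiv {α : Type*} [Fintype α] (p : Equiv.Perm α) (x₀ : α) :
    Fin (minimalPeriod p x₀) ≃ {z : α // Orb p x₀ z} :=
  Equiv.ofBijective (fun i => ⟨p^[(i : ℕ)] x₀, ⟨i, rfl⟩⟩)
    ⟨by
      intro i j hEq
      simp only [Subtype.mk.injEq] at hEq
      exact Fin.ext (Function.iterate_injOn_Iio_minimalPeriod
        (Set.mem_Iio.2 i.2) (Set.mem_Iio.2 j.2) (congrArg Subtype.val hEq)),
     by
      rintro ⟨z, k, rfl⟩
      exact ⟨⟨k % minimalPeriod p x₀, Nat.mod_lt k (perm_mp_pos p x₀)⟩,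
        Subtype.ext (Function.iterate_mod_minimalPeriod_eq)⟩⟩

theorem orbEquiv_val {α : Type*} [Fintype α] (p : Equiv.Perm α) (x₀ : α)
    (i : Fin (minimalPeriod p x₀)) : (orbEquiv p x₀ i).1 = p^[(i : ℕ)] x₀ := by
  simp [orbEquiv]; rfl

theorem orb_card {α : Type*} [Fintype α] (p : Equiv.Perm α) (x₀ : α) :
    Nat.card {z : α // Orb p x₀ z} = minimalPeriod p x₀ := by
  rw [← Nat.card_congr (orbEquiv p x₀)]
  simp

theorem orb_mp {α : Type*} [Finite α] (p : Equiv.Perm α) (x₀ : α) {z : α}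
    (h : Orb p x₀ z) : minimalPeriod p z = minimalPeriod p x₀ := by
  obtain ⟨k, rfl⟩ := h
  exact Function.minimalPeriod_apply_iterate (perm_periodic p x₀) k

theorem nat_card_split {α : Type*} [Fintype α] (A B : α → Prop) :
    Nat.card {z : α // A z} =
      Nat.card {z : α // A z ∧ B z} + Nat.card {z : α // A z ∧ ¬ B z} := by
  calc Nat.card {z : α // A z}
      = Nat.card ({w : {z : α // A z} // B w.1} ⊕ {w : {z : α // A z} // ¬ B w.1}) :=
        Nat.card_congr (Equiv.sumCompl (fun w : {z : α // A z} => B w.1)).symm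
    _ = _ := by
        rw [Nat.card_sum]
        rw [Nat.card_congr (Equiv.subtypeSubtypeEquivSubtypeInter A B),
          Nat.card_congr (Equiv.subtypeSubtypeEquivSubtypeInter A (fun z => ¬ B z))]

theorem nat_card_total_split {α : Type*} [Fintype α] (B : α → Prop) :
    Nat.card α = Nat.card {z : α // B z} + Nat.card {z : α // ¬ B z} := by
  rw [← Nat.card_sum]
  exact Nat.card_congr (Equiv.sumCompl B).symm

theorem subtypePerm_iterate {α : Type*} (p : Equiv.Perm α) {P : α → Prop}
    (h : ∀ x, P x ↔ P (p x)) :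
    ∀ (k : ℕ) (z : {x // P x}), ((p.subtypePerm (fun x => (h x).symm))^[k] z).1 = p^[k] z.1 := by
  intro k
  induction k with
  | zero => intro z; rfl
  | succ k ih =>
      intro z
      rw [Function.iterate_succ_apply', Function.iterate_succ_apply', ← ih z]
      rfl

theorem subtypePerm_mp {α : Type*} (p : Equiv.Perm α) {P : α → Prop}
    (h : ∀ x, P x ↔ P (p x)) (z : {x // P x}) :
    minimalPeriod (p.subtypePerm (fun x => (h x).symm)) z = minimalPeriod p z.1 := by
  rw [Function.minimalPeriod_eq_minimalPeriod_iff]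
  intro m
  show (p.subtypePerm (fun x => (h x).symm))^[m] z = z ↔ p^[m] z.1 = z.1
  rw [Subtype.ext_iff, subtypePerm_iterate p h m z]

theorem match_perm (N : ℕ) :
    ∀ {α β : Type} [Fintype α] [Fintype β] (p : Equiv.Perm α) (q : Equiv.Perm β),
      Fintype.card α ≤ N →
      (∀ ℓ : ℕ, Nat.card {x : α // minimalPeriod p x = ℓ} =
        Nat.card {y : β // minimalPeriod q y = ℓ}) →
      ∃ e : α ≃ β, ∀ x : α, e (p x) = q (e x) := by
  induction N with
  | zero =>
      intro α β _ _ p q hcard hcnt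
      have hA : IsEmpty α := by
        rw [← Fintype.card_eq_zero_iff]; omega
      have hB : IsEmpty β := by
        by_contra hne
        obtain ⟨y₀⟩ := not_isEmpty_iff.1 hne
        have h1 : 0 < Nat.card {y : β // minimalPeriod q y = minimalPeriod q y₀} :=
          Nat.card_pos_iff.2 ⟨⟨⟨y₀, rfl⟩⟩, inferInstance⟩
        rw [← hcnt] at h1
        have : IsEmpty {x : α // minimalPeriod p x = minimalPeriod q y₀} := by
          infer_instance
        simp [Nat.card_of_isEmpty] at h1
      exact ⟨Equiv.equivOfIsEmpty α β, fun x => isEmptyElim x⟩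
  | succ N ih =>
      intro α β _ _ p q hcard hcnt
      by_cases hem : IsEmpty α
      · have hB : IsEmpty β := by
          by_contra hne
          obtain ⟨y₀⟩ := not_isEmpty_iff.1 hne
          have h1 : 0 < Nat.card {y : β // minimalPeriod q y = minimalPeriod q y₀} :=
            Nat.card_pos_iff.2 ⟨⟨⟨y₀, rfl⟩⟩, inferInstance⟩
          rw [← hcnt] at h1
          simp [Nat.card_of_isEmpty] at h1
        exact ⟨Equiv.equivOfIsEmpty α β, fun x => isEmptyElim x⟩
      obtain ⟨x₀⟩ := not_isEmpty_iff.1 hem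
      set ℓ := minimalPeriod p x₀ with hℓdef
      have hℓpos : 0 < ℓ := perm_mp_pos p x₀
      -- find a point of the same minimal period in β
      have hy : ∃ y₀ : β, minimalPeriod q y₀ = ℓ := by
        have h1 : 0 < Nat.card {x : α // minimalPeriod p x = ℓ} :=
          Nat.card_pos_iff.2 ⟨⟨⟨x₀, rfl⟩⟩, inferInstance⟩
        rw [hcnt ℓ] at h1
        obtain ⟨⟨y₀, hy₀⟩⟩ := Nat.card_pos_iff.1 h1 |>.1
        exact ⟨y₀, hy₀⟩
      obtain ⟨y₀, hy₀⟩ := hy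
      -- restricted permutations
      set p' := p.subtypePerm (p := fun z => ¬ Orb p x₀ z) (fun z => (orb_not_iff p x₀ z).symm) with hp'def
      set q' := q.subtypePerm (p := fun z => ¬ Orb q y₀ z) (fun z => (orb_not_iff q y₀ z).symm) with hq'def
      -- count bookkeeping
      have hA' : ∀ m, Nat.card {w : {z : α // ¬ Orb p x₀ z} // minimalPeriod p' w = m} =
          Nat.card {z : α // minimalPeriod p z = m ∧ ¬ Orb p x₀ z} := by
        intro m
        refine Nat.card_congr (((Equiv.subtypeEquivRight ?_).trans
          (Equiv.subtypeSubtypeEquivSubtypeInter _ _)).trans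
            (Equiv.subtypeEquivRight (fun z => and_comm)))
        intro w
        rw [hp'def, subtypePerm_mp p (orb_not_iff p x₀)]
      have hB' : ∀ m, Nat.card {w : {z : β // ¬ Orb q y₀ z} // minimalPeriod q' w = m} =
          Nat.card {z : β // minimalPeriod q z = m ∧ ¬ Orb q y₀ z} := by
        intro m
        refine Nat.card_congr (((Equiv.subtypeEquivRight ?_).trans
          (Equiv.subtypeSubtypeEquivSubtypeInter _ _)).trans
            (Equiv.subtypeEquivRight (fun z => and_comm)))
        intro w
        rw [hq'def, subtypePerm_mp q (orb_not_iff q y₀)]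
      have horbA : ∀ m, Nat.card {z : α // minimalPeriod p z = m ∧ Orb p x₀ z} =
          if m = ℓ then ℓ else 0 := by
        intro m
        by_cases hm : m = ℓ
        · subst hm
          rw [if_pos rfl]
          rw [Nat.card_congr (Equiv.subtypeEquivRight (q := fun z => Orb p x₀ z)
            (fun z => ⟨fun h => h.2, fun h => ⟨orb_mp p x₀ h, h⟩⟩))]
          exact orb_card p x₀
        · rw [if_neg hm]
          have : IsEmpty {z : α // minimalPeriod p z = m ∧ Orb p x₀ z} :=
            ⟨fun w => hm (by rw [← w.2.1, orb_mp p x₀ w.2.2])⟩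
          exact Nat.card_of_isEmpty
      have horbB : ∀ m, Nat.card {z : β // minimalPeriod q z = m ∧ Orb q y₀ z} =
          if m = ℓ then ℓ else 0 := by
        intro m
        by_cases hm : m = ℓ
        · subst hm
          rw [if_pos rfl]
          rw [Nat.card_congr (Equiv.subtypeEquivRight (q := fun z => Orb q y₀ z)
            (fun z => ⟨fun h => h.2, fun h => ⟨(orb_mp q y₀ h).trans hy₀, h⟩⟩))]
          rw [orb_card q y₀, hy₀]
        · rw [if_neg hm]
          have : IsEmpty {z : β // minimalPeriod q z = m ∧ Orb q y₀ z} :=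
            ⟨fun w => hm (by rw [← w.2.1, orb_mp q y₀ w.2.2, hy₀])⟩
          exact Nat.card_of_isEmpty
      have hcnt' : ∀ m, Nat.card {w : {z : α // ¬ Orb p x₀ z} // minimalPeriod p' w = m} =
          Nat.card {w : {z : β // ¬ Orb q y₀ z} // minimalPeriod q' w = m} := by
        intro m
        have e1 := nat_card_split (fun z : α => minimalPeriod p z = m) (Orb p x₀)
        have e2 := nat_card_split (fun z : β => minimalPeriod q z = m) (Orb q y₀)
        rw [horbA m] at e1
        rw [horbB m] at e2
        rw [hA' m, hB' m]
        have e3 := hcnt m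
        omega
      -- cardinality decreases
      have hcard' : Fintype.card {z : α // ¬ Orb p x₀ z} ≤ N := by
        have e1 := nat_card_total_split (Orb p x₀) (α := α)
        rw [orb_card p x₀] at e1
        rw [Nat.card_eq_fintype_card, Nat.card_eq_fintype_card] at e1
        omega
      obtain ⟨e', he'⟩ := ih p' q' hcard' hcnt'
      -- the orbit equivalence
      have hfin : minimalPeriod p x₀ = minimalPeriod q y₀ := hy₀.symm
      set eO := ((orbEquiv p x₀).symm.trans (finCongr hfin)).trans (orbEquiv q y₀) with heOdef
      have heOk : ∀ k : ℕ, (eO ⟨p^[k] x₀, ⟨k, rfl⟩⟩).1 = q^[k] y₀ := by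
        intro k
        have h1 : (orbEquiv p x₀).symm ⟨p^[k] x₀, ⟨k, rfl⟩⟩ =
            ⟨k % ℓ, Nat.mod_lt k hℓpos⟩ := by
          rw [Equiv.symm_apply_eq]
          refine Subtype.ext ?_
          rw [orbEquiv_val]
          show p^[k] x₀ = p^[k % ℓ] x₀
          exact Function.iterate_mod_minimalPeriod_eq.symm
        rw [heOdef, Equiv.trans_apply, Equiv.trans_apply, h1]
        rw [orbEquiv_val]
        show q^[(k % ℓ)] y₀ = q^[k] y₀
        rw [show ℓ = minimalPeriod q y₀ from hy₀.symm]
        exact Function.iterate_mod_minimalPeriod_eq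
      -- glue
      set e := ((Equiv.sumCompl (Orb p x₀)).symm.trans
        ((Equiv.sumCongr eO e').trans (Equiv.sumCompl (Orb q y₀)))) with hedef
      have he_pos : ∀ (z : α) (h : Orb p x₀ z), e z = (eO ⟨z, h⟩).1 := by
        intro z h
        rw [hedef, Equiv.trans_apply, Equiv.trans_apply,
          Equiv.sumCompl_symm_apply_of_pos h]
        rfl
      have he_neg : ∀ (z : α) (h : ¬ Orb p x₀ z), e z = (e' ⟨z, h⟩).1 := by
        intro z h
        rw [hedef, Equiv.trans_apply, Equiv.trans_apply,
          Equiv.sumCompl_symm_apply_of_neg h]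
        rfl
      refine ⟨e, ?_⟩
      intro z
      by_cases hz : Orb p x₀ z
      · have hpz : Orb p x₀ (p z) := (orb_iff p x₀ z).2 hz
        rw [he_pos z hz, he_pos (p z) hpz]
        obtain ⟨k, rfl⟩ := hz
        have h2 : (⟨p (p^[k] x₀), hpz⟩ : {z : α // Orb p x₀ z}) =
            ⟨p^[k+1] x₀, ⟨k+1, rfl⟩⟩ :=
          Subtype.ext (Function.iterate_succ_apply' p k x₀).symm
        rw [h2, heOk (k + 1), heOk k, Function.iterate_succ_apply']
      · have hpz : ¬ Orb p x₀ (p z) := fun h => hz ((orb_iff p x₀ z).1 h)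
        rw [he_neg z hz, he_neg (p z) hpz]
        have h3 : (⟨p z, hpz⟩ : {z : α // ¬ Orb p x₀ z}) = p' ⟨z, hz⟩ :=
          Subtype.ext rfl
        rw [h3, he' ⟨z, hz⟩]
        rfl

end Aux6
section Aux7

open Function

attribute [local instance] Classical.propDecidable

variable {n : ℕ}

theorem bind_toPEquiv (σ : Equiv.Perm (Fin n)) (o : Option (Fin n)) :
    o.bind (σ.toPEquiv : Fin n → Option (Fin n)) = o.map σ := by
  cases o with
  | none => rfl
  | some u => simp [Equiv.toPEquiv_apply]

theorem core_pconj {π τ : (Fin n) ≃. (Fin n)} (σ : Equiv.Perm (Fin n))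
    (hcyc : ∀ a, Cyc π a ↔ Cyc τ (σ a))
    (hint : ∀ a, Cyc π a → τ (σ a) = Option.map σ (π a)) :
    PConj (π * PEquiv.ofSet {a | Cyc π a}) (τ * PEquiv.ofSet {a | Cyc τ a}) := by
  refine ⟨σ.symm.toPEquiv, σ.toPEquiv * (π * PEquiv.ofSet {a | Cyc π a}), ?_, ?_⟩
  · rw [← mul_assoc]
    have h1 : σ.symm.toPEquiv * σ.toPEquiv = PEquiv.refl (Fin n) := by
      show σ.toPEquiv.trans σ.symm.toPEquiv = PEquiv.refl (Fin n)
      rw [← Equiv.toPEquiv_trans, Equiv.self_trans_symm, Equiv.toPEquiv_refl]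
    rw [h1]
    show _ = (π * PEquiv.ofSet {a | Cyc π a}).trans (PEquiv.refl (Fin n))
    rw [PEquiv.trans_refl]
  · apply PEquiv.ext
    intro a
    have hR : (Equiv.toPEquiv σ * (π * PEquiv.ofSet {a | Cyc π a}) * σ.symm.toPEquiv) a
        = ((π * PEquiv.ofSet {a | Cyc π a}) (σ.symm a)).bind σ.toPEquiv := rfl
    rw [hR, restr_apply, restr_apply]
    simp only [Set.mem_setOf_eq]
    by_cases h : Cyc π (σ.symm a)
    · have hca : Cyc τ a := by
        have := (hcyc (σ.symm a)).1 h
        rwa [Equiv.apply_symm_apply] at this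
      rw [if_pos hca, if_pos (by exact h), bind_toPEquiv]
      have := hint (σ.symm a) h
      rwa [Equiv.apply_symm_apply] at this
    · have hca : ¬ Cyc τ a := by
        intro hca
        exact h ((hcyc (σ.symm a)).2 (by rwa [Equiv.apply_symm_apply]))
      rw [if_neg hca, if_neg (by exact h), Option.bind_none]

theorem backward_direction {π τ : (Fin n) ≃. (Fin n)}
    (hcnt : ∀ ℓ : ℕ, 1 ≤ ℓ → exactPeriodCount π ℓ = exactPeriodCount τ ℓ) :
    SConj π τ := by
  -- matching permutations on the cyclic parts
  have hmp : ∀ m : ℕ, Nat.card {z : {a : Fin n // Cyc π a} // minimalPeriod (permC π) z = m} =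
      Nat.card {z : {a : Fin n // Cyc τ a} // minimalPeriod (permC τ) z = m} := by
    intro m
    rcases Nat.eq_zero_or_pos m with hm | hm
    · subst hm
      have h1 : IsEmpty {z : {a : Fin n // Cyc π a} // minimalPeriod (permC π) z = 0} :=
        ⟨fun w => by have := perm_mp_pos (permC π) w.1; omega⟩
      have h2 : IsEmpty {z : {a : Fin n // Cyc τ a} // minimalPeriod (permC τ) z = 0} :=
        ⟨fun w => by have := perm_mp_pos (permC τ) w.1; omega⟩
      rw [Nat.card_of_isEmpty, Nat.card_of_isEmpty]
    · have hm1 : 1 ≤ m := hm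
      rw [← count_eq_mp π hm1, ← count_eq_mp τ hm1, ← count_eq_it π hm1, ← count_eq_it τ hm1]
      exact hcnt m hm1
  obtain ⟨e, he⟩ := match_perm (Fintype.card {a : Fin n // Cyc π a})
    (permC π) (permC τ) (le_refl _) hmp
  -- extend to a permutation of `Fin n`
  have hccard : Fintype.card {a : Fin n // ¬ Cyc π a} = Fintype.card {a : Fin n // ¬ Cyc τ a} := by
    rw [Fintype.card_subtype_compl, Fintype.card_subtype_compl, Fintype.card_congr e]
  set e₂ := Fintype.equivOfCardEq hccard with he₂def
  set σ := Equiv.subtypeCongr e e₂ with hσdef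
  have hσ_pos : ∀ (a : Fin n) (h : Cyc π a), σ a = (e ⟨a, h⟩).1 := by
    intro a h
    rw [hσdef]
    show ((Equiv.sumCompl _).symm.trans ((Equiv.sumCongr e e₂).trans (Equiv.sumCompl _))) a = _
    rw [Equiv.trans_apply, Equiv.trans_apply, Equiv.sumCompl_symm_apply_of_pos h]
    rfl
  have hσ_neg : ∀ (a : Fin n) (h : ¬ Cyc π a), σ a = (e₂ ⟨a, h⟩).1 := by
    intro a h
    rw [hσdef]
    show ((Equiv.sumCompl _).symm.trans ((Equiv.sumCongr e e₂).trans (Equiv.sumCompl _))) a = _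
    rw [Equiv.trans_apply, Equiv.trans_apply, Equiv.sumCompl_symm_apply_of_neg h]
    rfl
  have hcyc : ∀ a, Cyc π a ↔ Cyc τ (σ a) := by
    intro a
    constructor
    · intro h
      rw [hσ_pos a h]
      exact (e ⟨a, h⟩).2
    · intro h
      by_contra hna
      rw [hσ_neg a hna] at h
      exact (e₂ ⟨a, hna⟩).2 h
  have hint : ∀ a, Cyc π a → τ (σ a) = Option.map σ (π a) := by
    intro a h
    have h1 : π a = some ((permC π ⟨a, h⟩).1) := permC_apply_val π ⟨a, h⟩
    have h2 : τ ((e ⟨a, h⟩).1) = some ((permC τ (e ⟨a, h⟩)).1) :=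
      permC_apply_val τ (e ⟨a, h⟩)
    rw [hσ_pos a h, h2, h1, Option.map_some]
    congr 1
    rw [← he ⟨a, h⟩]
    exact (hσ_pos _ (permC π ⟨a, h⟩).2).symm
  -- assemble
  have hπ : SConj π (π * PEquiv.ofSet {a | Cyc π a}) := sconj_core π
  have hτ : SConj τ (τ * PEquiv.ofSet {a | Cyc τ a}) := sconj_core τ
  exact (hπ.trans (Relation.TransGen.single (core_pconj σ hcyc hint))).trans (sconj_symm hτ)

end Aux7

theorem isn_conjugate_iff_same_cyclic_type {n : ℕ} (π τ : (Fin n) ≃. (Fin n)) :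
    SConj π τ ↔ ∀ ℓ : ℕ, 1 ≤ ℓ → exactPeriodCount π ℓ = exactPeriodCount τ ℓ :=
  ⟨sconj_counts, backward_direction⟩
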